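/- Fix a probability measure μ and events S₁,...,S_m. Suppose there are constants ε ≥ 0 such that for each k ≥ 2, |μ(S₁∩...∩S_k) − μ(S₁∩...∩S_{k−1})·μ(S_k)| ≤ ε·μ(S₁∩...∩S_{k−1}). Then μ(S₁∩...∩S_m) ≤ Π_{i=1}^m (μ(S_i) + ε), and |μ(S₁∩...∩S_m) − Π_{i=1}^m μ(S_i)| ≤ m · (ε / min_i μ(S_i)) · Π_{i=1}^m (μ(S_i) + ε), provided min_i μ(S_i) > 0. -/

import Mathlib

open MeasureTheory Finset

/-! Write `P k` for the probability of the first `k` events and `p i` for that of the `i`-th.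
The hypothesis says `P (k + 1) = P k * p k` up to `ε * P k`. Hence `P (k + 1) ≤ P k * (p k + ε)`,
giving the first bound, and the triangle inequality through `P k * p k` adds at most
`ε * P k ≤ (ε / δ) * p k * ∏ (p i + ε)` to the error at each step, where `δ = minᵢ p i`. -/

section ApproxFactorization

variable {p P : ℕ → ℝ} {ε c : ℝ}

theorem le_prod_add_of_abs_sub_mul_le (hP0 : P 0 = 1) (hε : 0 ≤ ε) (hp : ∀ i, 0 ≤ p i)
    {n : ℕ} (h : ∀ k < n, |P (k + 1) - P k * p k| ≤ ε * P k) :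
    P n ≤ ∏ i ∈ range n, (p i + ε) := by
  induction n with
  | zero => simp [hP0]
  | succ n ih =>
    have hstep : P (n + 1) ≤ P n * (p n + ε) := by
      linarith [(abs_le.mp (h n n.lt_succ_self)).2]
    calc P (n + 1) ≤ P n * (p n + ε) := hstep
      _ ≤ (∏ i ∈ range n, (p i + ε)) * (p n + ε) :=
          mul_le_mul_of_nonneg_right (ih fun k hk => h k (by omega)) (by linarith [hp n])
      _ = ∏ i ∈ range (n + 1), (p i + ε) := (prod_range_succ _ _).symm

theorem abs_sub_prod_le_of_abs_sub_mul_le (hP0 : P 0 = 1) (hε : 0 ≤ ε) (hp : ∀ i, 0 ≤ p i)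
    (hc : 0 ≤ c) {n : ℕ} (hεc : ∀ i < n, ε ≤ c * p i)
    (h : ∀ k < n, |P (k + 1) - P k * p k| ≤ ε * P k) :
    |P n - ∏ i ∈ range n, p i| ≤ n * c * ∏ i ∈ range n, (p i + ε) := by
  induction n with
  | zero => simp [hP0]
  | succ n ih =>
    have h' : ∀ k < n, |P (k + 1) - P k * p k| ≤ ε * P k := fun k hk => h k (by omega)
    set Q := ∏ i ∈ range n, (p i + ε)
    have hQ : 0 ≤ Q := prod_nonneg fun i _ => by linarith [hp i]
    have hPQ : P n ≤ Q := le_prod_add_of_abs_sub_mul_le hP0 hε hp h'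
    have hnew : ε * P n ≤ c * (p n + ε) * Q :=
      calc ε * P n ≤ ε * Q := mul_le_mul_of_nonneg_left hPQ hε
        _ ≤ c * (p n + ε) * Q := by
          gcongr
          nlinarith [hεc n n.lt_succ_self]
    have hold : p n * |P n - ∏ i ∈ range n, p i| ≤ n * c * ((p n + ε) * Q) :=
      calc p n * |P n - ∏ i ∈ range n, p i| ≤ p n * (n * c * Q) :=
            mul_le_mul_of_nonneg_left (ih (fun i hi => hεc i (by omega)) h') (hp n)
        _ ≤ (p n + ε) * (n * c * Q) := by gcongr; linarith
        _ = n * c * ((p n + ε) * Q) := by ring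
    rw [prod_range_succ, prod_range_succ]
    calc |P (n + 1) - (∏ i ∈ range n, p i) * p n|
        = |(P (n + 1) - P n * p n) + p n * (P n - ∏ i ∈ range n, p i)| := by ring_nf
      _ ≤ |P (n + 1) - P n * p n| + p n * |P n - ∏ i ∈ range n, p i| := by
          rw [← abs_of_nonneg (hp n), ← abs_mul, abs_of_nonneg (hp n)]
          exact abs_add_le _ _
      _ ≤ ((n + 1 : ℕ) : ℝ) * c * (Q * (p n + ε)) := by
          push_cast
          linarith [h n n.lt_succ_self]

end ApproxFactorization

/-- the abstract inductive decorrelation estimate.  If a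
probability measure approximately factorizes over successive intersections of
events `S₁, …, S_m` with error `ε`, then the full intersection is bounded by
`Π (μ(Sᵢ) + ε)` and differs from `Π μ(Sᵢ)` by at most
`m · (ε / minᵢ μ(Sᵢ)) · Π (μ(Sᵢ) + ε)`, provided `minᵢ μ(Sᵢ) > 0`. -/
theorem stmt11 {Ω : Type*} [MeasurableSpace Ω] (μ : Measure Ω)
    [IsProbabilityMeasure μ] (m : ℕ) (hm : 0 < m) (S : ℕ → Set Ω) (ε : ℝ)
    (hε : 0 ≤ ε)
    (hfact : ∀ k, 2 ≤ k → k ≤ m →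
      |(μ (⋂ i ∈ range k, S i)).toReal -
          (μ (⋂ i ∈ range (k - 1), S i)).toReal * (μ (S (k - 1))).toReal| ≤
        ε * (μ (⋂ i ∈ range (k - 1), S i)).toReal)
    (hmin : 0 < (range m).inf' (Finset.nonempty_range_iff.mpr hm.ne')
        (fun i => (μ (S i)).toReal)) :
    (μ (⋂ i ∈ range m, S i)).toReal ≤ ∏ i ∈ range m, ((μ (S i)).toReal + ε) ∧
      |(μ (⋂ i ∈ range m, S i)).toReal - ∏ i ∈ range m, (μ (S i)).toReal| ≤
        (m : ℝ) *
          (ε / (range m).inf' (Finset.nonempty_range_iff.mpr hm.ne')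
            (fun i => (μ (S i)).toReal)) *
          ∏ i ∈ range m, ((μ (S i)).toReal + ε) := by
  set δ := (range m).inf' (Finset.nonempty_range_iff.mpr hm.ne') fun i => (μ (S i)).toReal
  have hP0 : (μ (⋂ i ∈ range 0, S i)).toReal = 1 := by simp
  have hp : ∀ i, 0 ≤ (μ (S i)).toReal := fun _ => ENNReal.toReal_nonneg
  have hstep : ∀ k < m, |(μ (⋂ i ∈ range (k + 1), S i)).toReal -
      (μ (⋂ i ∈ range k, S i)).toReal * (μ (S k)).toReal| ≤
        ε * (μ (⋂ i ∈ range k, S i)).toReal := by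
    rintro (_ | k) hk
    · simp [hε]
    · exact hfact (k + 2) (by omega) hk
  have hεδ : ∀ i < m, ε ≤ ε / δ * (μ (S i)).toReal := fun i hi =>
    calc ε = ε / δ * δ := (div_mul_cancel₀ ε hmin.ne').symm
      _ ≤ ε / δ * (μ (S i)).toReal :=
          mul_le_mul_of_nonneg_left (inf'_le _ (mem_range.mpr hi)) (div_nonneg hε hmin.le)
  exact ⟨le_prod_add_of_abs_sub_mul_le (P := fun k => (μ (⋂ i ∈ range k, S i)).toReal)
      hP0 hε hp hstep,
    abs_sub_prod_le_of_abs_sub_mul_le (P := fun k => (μ (⋂ i ∈ range k, S i)).toReal)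
      hP0 hε hp (div_nonneg hε hmin.le) hεδ hstep⟩
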